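/- In the graph consensus setting with each A_i symmetric positive semidefinite and nonzero, suppose Γ is connected, set γ_min = min_i λ_max(A_i)⁻¹ and α_max = max_i α_i, and let μ > 0 satisfy Σ_{{i,j}∈E(Γ)} ‖y_i − y_j‖² ≤ μ Σ_{i=1}^n ‖y_i‖² for all (y_1,…,y_n) ∈ (ℝ^d)^n. Assume the affine subspaces X_i := x_i(0) + range(A_i) have non-empty intersection X := ∩_{i=1}^n X_i ≠ ∅, and that 0 < α_max < 2γ_min/μ. Then there exists a point x* ∈ X such that x_i(k) → x* as k → ∞ for every agent i; i.e., the agents converge to a consensus point lying in X. -/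

import Mathlib

open Matrix BigOperators Filter RealInnerProductSpace

/-- The Euclidean norm on `Fin d → ℝ`. -/
noncomputable def enorm {d : ℕ} (v : Fin d → ℝ) : ℝ := Real.sqrt (∑ a, v a ^ 2)

def EtoP {d : ℕ} (v : EuclideanSpace ℝ (Fin d)) : Fin d → ℝ := v

lemma EtoP_sub {d : ℕ} (a b : EuclideanSpace ℝ (Fin d)) : EtoP (a - b) = EtoP a - EtoP b := rfl

lemma EtoP_sum {d : ℕ} {ι : Type*} (s : Finset ι) (f : ι → EuclideanSpace ℝ (Fin d)) :
    EtoP (∑ j ∈ s, f j) = ∑ j ∈ s, EtoP (f j) :=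
  map_sum (AddMonoidHom.mk' EtoP (fun _ _ => rfl)) f s

lemma enorm_eq {d : ℕ} (v : EuclideanSpace ℝ (Fin d)) : _root_.enorm (v : Fin d → ℝ) = ‖v‖ := by
  rw [EuclideanSpace.norm_eq, _root_.enorm]
  congr 1
  exact Finset.sum_congr rfl fun a _ => by rw [Real.norm_eq_abs, sq_abs]

section Spectral
variable {F : Type*} [NormedAddCommGroup F] [InnerProductSpace ℝ F] [FiniteDimensional ℝ F]

lemma eval_le_of_eigs (T : F →ₗ[ℝ] F) (hT : T.IsSymmetric) (c : ℝ)
    (hc : ∀ (t : ℝ) (v : F), v ≠ 0 → T v = t • v → t ≤ c) (v : F) :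
    ⟪T v, v⟫ ≤ c * ‖v‖ ^ 2 := by
  let b := hT.eigenvectorBasis rfl
  let μ : Fin (Module.finrank ℝ F) → ℝ := hT.eigenvalues rfl
  have hb : ∀ i, T (b i) = μ i • b i := fun i => hT.apply_eigenvectorBasis rfl i
  have hμc : ∀ i, μ i ≤ c := fun i =>
    hc (μ i) (b i) ((hT.hasEigenvector_eigenvectorBasis rfl i).2) (hb i)
  have hv : v = ∑ i, ⟪b i, v⟫ • b i := by
    simpa [b.repr_apply_apply] using (b.sum_repr' v).symm
  have hTv : T v = ∑ i, (μ i * ⟪b i, v⟫) • b i := by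
    conv_lhs => rw [hv]
    rw [map_sum]
    refine Finset.sum_congr rfl fun i _ => ?_
    rw [_root_.map_smul, hb i, smul_smul, mul_comm]
  have h1 : ⟪T v, v⟫ = ∑ i, μ i * ⟪b i, v⟫ ^ 2 := by
    rw [hTv, sum_inner]
    refine Finset.sum_congr rfl fun i _ => ?_
    rw [real_inner_smul_left, real_inner_comm]; ring
  have h2 : ‖v‖ ^ 2 = ∑ i, ⟪b i, v⟫ ^ 2 := by
    have hn : ‖v‖ = ‖b.repr v‖ := (b.repr.norm_map v).symm
    rw [hn, EuclideanSpace.norm_eq, Real.sq_sqrt (by positivity)]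
    exact Finset.sum_congr rfl fun i _ => by
      rw [b.repr_apply_apply, Real.norm_eq_abs, sq_abs]
  rw [h1, h2, Finset.mul_sum]
  refine Finset.sum_le_sum fun i _ => ?_
  have := sq_nonneg (⟪b i, v⟫)
  nlinarith [hμc i]

lemma pow_tendsto_of_symmetric (T : F →ₗ[ℝ] F) (hT : T.IsSymmetric)
    (hle : ∀ (t : ℝ) (v : F), v ≠ 0 → T v = t • v → (-1 < t ∧ t ≤ 1)) (v : F) :
    ∃ w : F, T w = w ∧ Tendsto (fun k => (T ^ k) v) atTop (nhds w) := by
  let b := hT.eigenvectorBasis rfl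
  let μ : Fin (Module.finrank ℝ F) → ℝ := hT.eigenvalues rfl
  have hb : ∀ i, T (b i) = μ i • b i := fun i => hT.apply_eigenvectorBasis rfl i
  have hμ : ∀ i, -1 < μ i ∧ μ i ≤ 1 := fun i =>
    hle (μ i) (b i) ((hT.hasEigenvector_eigenvectorBasis rfl i).2) (hb i)
  have hpow : ∀ k, (T ^ k) v = ∑ i, (μ i ^ k * ⟪b i, v⟫) • b i := by
    intro k; induction k with
    | zero => simpa using (b.sum_repr' v).symm
    | succ k ih =>
      rw [pow_succ', Module.End.mul_apply, ih, map_sum]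
      refine Finset.sum_congr rfl fun i _ => ?_
      rw [_root_.map_smul, hb i, smul_smul]
      congr 1; ring
  refine ⟨∑ i, ((if μ i = 1 then (1:ℝ) else 0) * ⟪b i, v⟫) • b i, ?_, ?_⟩
  · rw [map_sum]; refine Finset.sum_congr rfl fun i _ => ?_
    rw [_root_.map_smul, hb i, smul_smul]
    by_cases h : μ i = 1 <;> simp [h]
  · simp_rw [hpow]
    refine tendsto_finset_sum _ fun i _ => ?_
    refine Tendsto.smul_const ?_ (b i)
    refine Tendsto.mul_const _ ?_
    by_cases h : μ i = 1
    · simp only [h]; exact tendsto_const_nhds.congr fun k => (one_pow k).symm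
    · have habs : |μ i| < 1 := abs_lt.mpr ⟨(hμ i).1, lt_of_le_of_ne (hμ i).2 h⟩
      simpa [h] using tendsto_pow_atTop_nhds_zero_of_abs_lt_one habs

end Spectral

noncomputable def mvE {d : ℕ} (M : Matrix (Fin d) (Fin d) ℝ) :
    EuclideanSpace ℝ (Fin d) →ₗ[ℝ] EuclideanSpace ℝ (Fin d) where
  toFun v := WithLp.toLp 2 (M.mulVec v)
  map_add' a b := by simp [Matrix.mulVec_add]
  map_smul' c a := by simp [Matrix.mulVec_smul]

lemma inner_mvE_symm {d : ℕ} (M : Matrix (Fin d) (Fin d) ℝ) (hM : M.IsHermitian)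
    (a b : EuclideanSpace ℝ (Fin d)) : ⟪mvE M a, b⟫ = ⟪a, mvE M b⟫ := by
  have hMt : Mᵀ = M := by
    have := hM.eq
    rwa [Matrix.conjTranspose_eq_transpose_of_trivial] at this
  simp only [mvE, LinearMap.coe_mk, AddHom.coe_mk, PiLp.inner_apply, RCLike.inner_apply,
    starRingEnd_apply, star_trivial]
  have h1 : ∑ t, (M.mulVec a) t * b t = M.mulVec a ⬝ᵥ b := rfl
  have h2 : ∑ t, a t * (M.mulVec b) t = a ⬝ᵥ M.mulVec b := rfl
  have h3 : ∑ t, b t * (M.mulVec a) t = ∑ t, (M.mulVec a) t * b t :=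
    Finset.sum_congr rfl fun t _ => mul_comm _ _
  have h4 : ∑ t, (M.mulVec b) t * a t = ∑ t, a t * (M.mulVec b) t :=
    Finset.sum_congr rfl fun t _ => mul_comm _ _
  rw [h3, h4, h1, h2, Matrix.dotProduct_mulVec, ← Matrix.mulVec_transpose, hMt]

open scoped MatrixOrder in
lemma psd_sqrt_exists {d : ℕ} (A : Matrix (Fin d) (Fin d) ℝ) (h : A.PosSemidef) :
    ∃ S : Matrix (Fin d) (Fin d) ℝ, S * S = A ∧ S.IsHermitian :=
  ⟨CFC.sqrt A, CFC.sqrt_mul_sqrt_self A h.nonneg, (CFC.sqrt_nonneg A).posSemidef.1⟩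

variable {n d : ℕ}

/-- Block-diagonal map `u i ↦ √(α i) • S i *ᵥ u i` on `PiLp 2`. -/
noncomputable def Wmap (α : Fin n → ℝ) (S : Fin n → Matrix (Fin d) (Fin d) ℝ) :
    PiLp 2 (fun _ : Fin n => EuclideanSpace ℝ (Fin d)) →ₗ[ℝ]
      PiLp 2 (fun _ : Fin n => EuclideanSpace ℝ (Fin d)) where
  toFun u := WithLp.toLp 2 (fun i => WithLp.toLp 2 (Real.sqrt (α i) • (S i).mulVec (u i)))
  map_add' a b := by
    ext i j
    simp [Matrix.mulVec_add, smul_add, mul_add]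
  map_smul' c a := by
    ext i j
    simp [Matrix.mulVec_smul]
    ring

/-- Graph Laplacian as a linear map on `PiLp 2`. -/
noncomputable def LapMap (Γ : SimpleGraph (Fin n)) [DecidableRel Γ.Adj] :
    PiLp 2 (fun _ : Fin n => EuclideanSpace ℝ (Fin d)) →ₗ[ℝ]
      PiLp 2 (fun _ : Fin n => EuclideanSpace ℝ (Fin d)) where
  toFun y := WithLp.toLp 2 (fun i => ∑ j ∈ Γ.neighborFinset i, (y i - y j))
  map_add' a b := by
    ext i : 1
    show ∑ j ∈ Γ.neighborFinset i, ((a + b) i - (a + b) j) = _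
    show ∑ j ∈ Γ.neighborFinset i, (a i + b i - (a j + b j)) = _
    show _ = (∑ j ∈ Γ.neighborFinset i, (a i - a j)) + ∑ j ∈ Γ.neighborFinset i, (b i - b j)
    rw [← Finset.sum_add_distrib]
    congr 1; funext j; abel
  map_smul' c a := by
    ext i : 1
    show ∑ j ∈ Γ.neighborFinset i, (c • a i - c • a j) = c • ∑ j ∈ Γ.neighborFinset i, (a i - a j)
    rw [Finset.smul_sum]
    congr 1; funext j; rw [smul_sub]

lemma adj_swap (Γ : SimpleGraph (Fin n)) [DecidableRel Γ.Adj] (f : Fin n → Fin n → ℝ) :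
    ∑ i, ∑ j, (if Γ.Adj i j then f i j else 0)
      = ∑ i, ∑ j, (if Γ.Adj i j then f j i else 0) := by
  rw [Finset.sum_comm]
  refine Finset.sum_congr rfl fun a _ => Finset.sum_congr rfl fun b _ => ?_
  by_cases h : Γ.Adj a b
  · rw [if_pos (Γ.adj_symm h), if_pos h]
  · rw [if_neg (fun hc => h (Γ.adj_symm hc)), if_neg h]

lemma adj_split (Γ : SimpleGraph (Fin n)) [DecidableRel Γ.Adj] (g : Fin n → Fin n → ℝ)
    (hsym : ∀ i j, g i j = g j i) :
    ∑ i, ∑ j, (if Γ.Adj i j then g i j else 0)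
      = 2 * ∑ i, ∑ j ∈ Finset.univ.filter (fun j => i < j ∧ Γ.Adj i j), g i j := by
  have h1 : ∀ i j : Fin n, (if Γ.Adj i j then g i j else 0)
      = (if i < j ∧ Γ.Adj i j then g i j else 0) + (if j < i ∧ Γ.Adj i j then g i j else 0) := by
    intro i j
    by_cases h : Γ.Adj i j
    · rcases lt_or_gt_of_ne (Γ.ne_of_adj h) with hlt | hgt
      · simp [h, hlt, not_lt_of_gt hlt]
      · simp [h, hgt, not_lt_of_gt hgt]
    · simp [h]
  simp_rw [h1, Finset.sum_add_distrib]
  have h2 : ∑ i, ∑ j, (if j < i ∧ Γ.Adj i j then g i j else 0)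
      = ∑ i, ∑ j, (if i < j ∧ Γ.Adj i j then g i j else 0) := by
    rw [Finset.sum_comm]
    refine Finset.sum_congr rfl fun a _ => Finset.sum_congr rfl fun b _ => ?_
    rcases lt_trichotomy a b with hlt | heq | hgt
    · by_cases h : Γ.Adj a b
      · rw [if_pos ⟨hlt, Γ.adj_symm h⟩, if_pos ⟨hlt, h⟩, hsym b a]
      · rw [if_neg (fun hc => h (Γ.adj_symm hc.2)), if_neg (fun hc => h hc.2)]
    · subst heq
      rw [if_neg (fun hc => lt_irrefl a hc.1)]
    · rw [if_neg (fun hc => absurd hc.1 (not_lt_of_gt hgt)),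
        if_neg (fun hc => absurd hc.1 (not_lt_of_gt hgt))]
  rw [h2]
  have h3 : ∀ i : Fin n, ∑ j ∈ Finset.univ.filter (fun j => i < j ∧ Γ.Adj i j), g i j
      = ∑ j, (if i < j ∧ Γ.Adj i j then g i j else 0) := fun i => Finset.sum_filter _ _
  simp_rw [h3]; ring

lemma lap_inner (Γ : SimpleGraph (Fin n)) [DecidableRel Γ.Adj]
    (y w : PiLp 2 (fun _ : Fin n => EuclideanSpace ℝ (Fin d))) :
    ⟪LapMap Γ y, w⟫ = ∑ i, ∑ j, (if Γ.Adj i j then ⟪y i - y j, w i⟫ else 0) := by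
  rw [PiLp.inner_apply]
  refine Finset.sum_congr rfl fun i _ => ?_
  change ⟪∑ j ∈ Γ.neighborFinset i, (y i - y j), w i⟫ = _
  rw [sum_inner]
  rw [show Γ.neighborFinset i = Finset.univ.filter (fun j => Γ.Adj i j) from by
    ext j; simp [SimpleGraph.mem_neighborFinset]]
  exact Finset.sum_filter _ _

lemma lap_symm (Γ : SimpleGraph (Fin n)) [DecidableRel Γ.Adj] :
    (LapMap Γ : PiLp 2 (fun _ : Fin n => EuclideanSpace ℝ (Fin d)) →ₗ[ℝ] _).IsSymmetric := by
  intro y w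
  rw [lap_inner, real_inner_comm, lap_inner]
  have e1 : ∀ i j : Fin n, (if Γ.Adj i j then ⟪y i - y j, w i⟫ else 0)
      = (if Γ.Adj i j then ⟪y i, w i⟫ else 0) - (if Γ.Adj i j then ⟪y j, w i⟫ else 0) := by
    intro i j; by_cases h : Γ.Adj i j <;> simp [h, inner_sub_left]
  have e2 : ∀ i j : Fin n, (if Γ.Adj i j then ⟪w i - w j, y i⟫ else 0)
      = (if Γ.Adj i j then ⟪y i, w i⟫ else 0) - (if Γ.Adj i j then ⟪w j, y i⟫ else 0) := by
    intro i j; by_cases h : Γ.Adj i j <;>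
      simp [h, inner_sub_left, real_inner_comm (w i) (y i)]
  simp_rw [e1, e2, Finset.sum_sub_distrib]
  congr 1
  rw [adj_swap Γ (fun i j => ⟪y j, w i⟫)]
  refine Finset.sum_congr rfl fun i _ => Finset.sum_congr rfl fun j _ => ?_
  rw [real_inner_comm]

lemma lap_quad (Γ : SimpleGraph (Fin n)) [DecidableRel Γ.Adj]
    (y : PiLp 2 (fun _ : Fin n => EuclideanSpace ℝ (Fin d))) :
    ⟪LapMap Γ y, y⟫ = ∑ i, ∑ j ∈ Finset.univ.filter (fun j => i < j ∧ Γ.Adj i j),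
      ‖y i - y j‖ ^ 2 := by
  have h1 := lap_inner Γ y y
  have h2 : ⟪LapMap Γ y, y⟫ = ∑ i, ∑ j, (if Γ.Adj i j then ⟪y j - y i, y j⟫ else 0) := by
    rw [h1, adj_swap Γ (fun i j => ⟪y i - y j, y i⟫)]
  have h3 : ⟪LapMap Γ y, y⟫ + ⟪LapMap Γ y, y⟫
      = ∑ i, ∑ j, (if Γ.Adj i j then ‖y i - y j‖ ^ 2 else 0) := by
    nth_rewrite 2 [h2]
    nth_rewrite 1 [h1]
    rw [← Finset.sum_add_distrib]
    refine Finset.sum_congr rfl fun i _ => ?_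
    rw [← Finset.sum_add_distrib]
    refine Finset.sum_congr rfl fun j _ => ?_
    by_cases h : Γ.Adj i j
    · simp only [h, if_true]
      have : ⟪y i - y j, y i⟫ + ⟪y j - y i, y j⟫ = ⟪y i - y j, y i - y j⟫ := by
        rw [inner_sub_right]
        have : ⟪y j - y i, y j⟫ = -⟪y i - y j, y j⟫ := by
          rw [← inner_neg_left]; congr 1; abel
        rw [this]; ring
      rw [this, real_inner_self_eq_norm_sq]
    · simp [h]
  have h4 := adj_split Γ (fun i j => ‖y i - y j‖ ^ 2) (fun i j => by
    show ‖y i - y j‖ ^ 2 = ‖y j - y i‖ ^ 2; rw [norm_sub_rev])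
  rw [h4] at h3
  linarith

set_option maxHeartbeats 1600000 in
set_option synthInstance.maxHeartbeats 400000 in
/-- In the graph consensus setting with `Γ` connected and nonzero
symmetric PSD weights `A_i`, with `γ_min = min_i λ_max(A_i)⁻¹`, `α_max = max_i α_i`,
largest Laplacian eigenvalue of `Γ` at most `μ`, non-empty intersection of the affine
subspaces `X_i = x_i(0) + range(A_i)`, and `0 < α_max < 2 γ_min / μ`, the agents
converge to a common point `x* ∈ X = ∩_i X_i`. -/
theorem consensus_convergence_psd_weights
    (n d : ℕ) (hn : 0 < n) (hd : 0 < d)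
    (Γ : SimpleGraph (Fin n)) [DecidableRel Γ.Adj] (hconn : Γ.Connected)
    (A : Fin n → Matrix (Fin d) (Fin d) ℝ)
    (hpsd : ∀ i, (A i).PosSemidef) (hA0 : ∀ i, A i ≠ 0)
    (α : Fin n → ℝ) (hα : ∀ i, 0 < α i)
    (lmax : Fin n → ℝ)
    (hlmax_eig : ∀ i, ∃ v : Fin d → ℝ, v ≠ 0 ∧ (A i).mulVec v = lmax i • v)
    (hlmax_top : ∀ (i : Fin n) (t : ℝ) (v : Fin d → ℝ),
      v ≠ 0 → (A i).mulVec v = t • v → t ≤ lmax i)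
    (γmin αmax : ℝ)
    (hγmin : γmin = Finset.univ.inf' (Finset.univ_nonempty_iff.mpr ⟨⟨0, hn⟩⟩)
      (fun i : Fin n => (lmax i)⁻¹))
    (hαmax : αmax = Finset.univ.sup' (Finset.univ_nonempty_iff.mpr ⟨⟨0, hn⟩⟩) α)
    (μ : ℝ) (hμ : 0 < μ)
    (hμbound : ∀ y : Fin n → Fin d → ℝ,
      ∑ i : Fin n, ∑ j ∈ Finset.univ.filter (fun j : Fin n => i < j ∧ Γ.Adj i j),
          _root_.enorm (y i - y j) ^ 2 ≤ μ * ∑ i : Fin n, _root_.enorm (y i) ^ 2)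
    (x : ℕ → Fin n → Fin d → ℝ)
    (hupd : ∀ k i, x (k + 1) i =
      x k i - α i • (A i).mulVec (∑ j ∈ Γ.neighborFinset i, (x k i - x k j)))
    (hinter : ∃ z : Fin d → ℝ, ∀ i : Fin n,
      z - x 0 i ∈ LinearMap.range (A i).mulVecLin)
    (hstep : αmax < 2 * γmin / μ) :
    ∃ xstar : Fin d → ℝ,
      (∀ i : Fin n, xstar - x 0 i ∈ LinearMap.range (A i).mulVecLin) ∧
      ∀ i : Fin n, Tendsto (fun k : ℕ => x k i) atTop (nhds xstar) := by
  classical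
  obtain ⟨z, hz⟩ := hinter
  choose w hw using fun i => LinearMap.mem_range.mp (hz i)
  choose S hSS hSH using fun i => psd_sqrt_exists (A i) (hpsd i)
  have hAv : ∀ (i : Fin n) (v : Fin d → ℝ),
      (A i).mulVec v = (S i).mulVec ((S i).mulVec v) := by
    intro i v; rw [Matrix.mulVec_mulVec, hSS]
  have hsq : ∀ i, Real.sqrt (α i) * Real.sqrt (α i) = α i :=
    fun i => Real.mul_self_sqrt (hα i).le
  have hsqpos : ∀ i, 0 < Real.sqrt (α i) := fun i => Real.sqrt_pos.mpr (hα i)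
  -- symmetric linear maps on EuclideanSpace
  have hAsym : ∀ i, (mvE (A i)).IsSymmetric := fun i a b => inner_mvE_symm (A i) (hpsd i).1 a b
  have hquadA : ∀ (i : Fin n) (v : EuclideanSpace ℝ (Fin d)),
      ⟪mvE (A i) v, v⟫ = ‖mvE (S i) v‖ ^ 2 := by
    intro i v
    have : mvE (A i) v = mvE (S i) (mvE (S i) v) := congrArg (WithLp.toLp 2) (hAv i v)
    rw [this, inner_mvE_symm (S i) (hSH i), real_inner_self_eq_norm_sq]
  have hAnn : ∀ (i : Fin n) (v : EuclideanSpace ℝ (Fin d)), 0 ≤ ⟪mvE (A i) v, v⟫ := by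
    intro i v; rw [hquadA]; positivity
  have hRay : ∀ (i : Fin n) (v : EuclideanSpace ℝ (Fin d)),
      ⟪mvE (A i) v, v⟫ ≤ lmax i * ‖v‖ ^ 2 := by
    intro i v
    exact eval_le_of_eigs (mvE (A i)) (hAsym i) (lmax i)
      (fun t u hu hequ => hlmax_top i t u (fun h => hu (WithLp.ofLp_injective 2 h))
        (congrArg WithLp.ofLp hequ)) v
  have hlmax_pos : ∀ i, 0 < lmax i := by
    intro i
    by_contra hcon
    push_neg at hcon
    have hSz : ∀ v : EuclideanSpace ℝ (Fin d), (S i).mulVec v = 0 := by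
      intro v
      have h1 : ⟪mvE (A i) v, v⟫ ≤ 0 := by
        have h2 := hRay i v
        nlinarith [sq_nonneg ‖v‖]
      have h3 : ‖mvE (S i) v‖ ^ 2 ≤ 0 := by rw [← hquadA i v]; exact h1
      have h4 : ‖mvE (S i) v‖ = 0 := by nlinarith [norm_nonneg (mvE (S i) v)]
      have h7 : mvE (S i) v = 0 := norm_eq_zero.mp h4
      exact congrArg WithLp.ofLp h7
    refine hA0 i ?_
    ext a b
    have h5 : (A i).mulVec (Pi.single b 1) = 0 := by
      rw [hAv i]; exact hSz (WithLp.toLp 2 _)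
    have h6 := congrFun h5 a
    rw [Matrix.mulVec_single] at h6
    simpa using h6
  have hγpos : 0 < γmin := by
    rw [hγmin]
    exact (Finset.lt_inf'_iff _).mpr fun i _ => inv_pos.mpr (hlmax_pos i)
  have hγle : ∀ i, γmin ≤ (lmax i)⁻¹ := fun i => hγmin ▸ Finset.inf'_le _ (Finset.mem_univ i)
  have hαle : ∀ i, α i ≤ αmax := fun i => hαmax ▸ Finset.le_sup' _ (Finset.mem_univ i)
  have hαmaxpos : 0 < αmax := lt_of_lt_of_le (hα ⟨0, hn⟩) (hαle ⟨0, hn⟩)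
  have hlmax_le : ∀ i, lmax i ≤ γmin⁻¹ := by
    intro i
    rw [← inv_inv (lmax i)]
    exact inv_anti₀ hγpos (hγle i)
  have hkey : μ * (αmax * γmin⁻¹) < 2 := by
    rw [lt_div_iff₀ hμ] at hstep
    have h3 : γmin⁻¹ * γmin = 1 := inv_mul_cancel₀ hγpos.ne'
    nlinarith [inv_pos.mpr hγpos]
  -- the maps
  set W := Wmap α S with hWdef
  set Lp := LapMap (d := d) Γ with hLpdef
  set C := W.comp (Lp.comp W) with hCdef
  set Nl := (LinearMap.id : PiLp 2 (fun _ : Fin n => EuclideanSpace ℝ (Fin d)) →ₗ[ℝ] _) - C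
    with hNdef
  have hWap : ∀ (u : PiLp 2 (fun _ : Fin n => EuclideanSpace ℝ (Fin d))) (i : Fin n),
      W u i = WithLp.toLp 2 (Real.sqrt (α i) • (S i).mulVec (u i)) := fun u i => rfl
  have hWsym : W.IsSymmetric := by
    intro u v
    rw [PiLp.inner_apply, PiLp.inner_apply]
    refine Finset.sum_congr rfl fun i _ => ?_
    rw [hWap, hWap, WithLp.toLp_smul, WithLp.toLp_smul]
    rw [real_inner_smul_left, real_inner_smul_right]
    congr 1
    exact inner_mvE_symm (S i) (hSH i) (u i) (v i)
  have hNsym : Nl.IsSymmetric := by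
    intro u v
    rw [hNdef]
    simp only [LinearMap.sub_apply, LinearMap.id_apply, inner_sub_left, inner_sub_right]
    congr 1
    rw [hCdef]
    simp only [LinearMap.coe_comp, Function.comp_apply]
    rw [hWsym (Lp (W u)) v, ← hWsym u (Lp (W v))]
    exact lap_symm Γ (W u) (W v)
  -- quadratic form bounds
  have hWnormsq : ∀ (u : PiLp 2 (fun _ : Fin n => EuclideanSpace ℝ (Fin d))),
      ∑ i, ‖W u i‖ ^ 2 ≤ αmax * γmin⁻¹ * ‖u‖ ^ 2 := by
    intro u
    have hnorm : ‖u‖ ^ 2 = ∑ i, ‖u i‖ ^ 2 := PiLp.norm_sq_eq_of_L2 _ u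
    rw [hnorm, Finset.mul_sum]
    refine Finset.sum_le_sum fun i _ => ?_
    have e0 : ‖W u i‖ ^ 2 = α i * ‖mvE (S i) (u i)‖ ^ 2 := by
      rw [hWap, WithLp.toLp_smul, norm_smul, mul_pow, Real.norm_eq_abs, sq_abs, sq, hsq i]
      rfl
    rw [e0, ← hquadA i (u i)]
    have h1 : ⟪mvE (A i) (u i), u i⟫ ≤ lmax i * ‖u i‖ ^ 2 := hRay i (u i)
    have h2 : α i * ⟪mvE (A i) (u i), u i⟫ ≤ α i * (lmax i * ‖u i‖ ^ 2) :=
      mul_le_mul_of_nonneg_left h1 (hα i).le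
    refine h2.trans ?_
    have h3 : α i * lmax i ≤ αmax * γmin⁻¹ :=
      mul_le_mul (hαle i) (hlmax_le i) (hlmax_pos i).le hαmaxpos.le
    nlinarith [sq_nonneg ‖u i‖, hlmax_pos i, hα i]
  have hCq : ∀ (u : PiLp 2 (fun _ : Fin n => EuclideanSpace ℝ (Fin d))),
      ⟪C u, u⟫ = ∑ i, ∑ j ∈ Finset.univ.filter (fun j => i < j ∧ Γ.Adj i j),
        ‖W u i - W u j‖ ^ 2 := by
    intro u
    rw [hCdef]
    simp only [LinearMap.coe_comp, Function.comp_apply]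
    rw [hWsym (Lp (W u)) u]
    exact lap_quad Γ (W u)
  have hCnn : ∀ u, 0 ≤ ⟪C u, u⟫ := by
    intro u; rw [hCq]; positivity
  have hCub : ∀ (u : PiLp 2 (fun _ : Fin n => EuclideanSpace ℝ (Fin d))),
      ⟪C u, u⟫ ≤ μ * (αmax * γmin⁻¹) * ‖u‖ ^ 2 := by
    intro u
    rw [hCq]
    have h1 := hμbound (fun i => EtoP (W u i))
    have e1 : ∀ i j : Fin n, _root_.enorm (EtoP (W u i) - EtoP (W u j)) = ‖W u i - W u j‖ :=
      fun i j => enorm_eq (W u i - W u j)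
    have e2 : ∀ i : Fin n, _root_.enorm (EtoP (W u i)) = ‖W u i‖ := fun i => enorm_eq (W u i)
    simp only [e1, e2] at h1
    refine h1.trans ?_
    have h2 := hWnormsq u
    nlinarith [hμ]
  have hNeig : ∀ (t : ℝ) (v : PiLp 2 (fun _ : Fin n => EuclideanSpace ℝ (Fin d))),
      v ≠ 0 → Nl v = t • v → (-1 < t ∧ t ≤ 1) := by
    intro t v hv heq
    have hvpos : (0:ℝ) < ‖v‖ ^ 2 := by
      have := norm_pos_iff.mpr hv
      positivity
    have h1 : ⟪Nl v, v⟫ = t * ‖v‖ ^ 2 := by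
      rw [heq, real_inner_smul_left, real_inner_self_eq_norm_sq]
    have h2 : ⟪Nl v, v⟫ = ‖v‖ ^ 2 - ⟪C v, v⟫ := by
      rw [hNdef]
      simp only [LinearMap.sub_apply, LinearMap.id_apply, inner_sub_left]
      rw [real_inner_self_eq_norm_sq]
    have h3 := hCnn v
    have h4 := lt_of_le_of_lt (hCub v) (by nlinarith : μ * (αmax * γmin⁻¹) * ‖v‖ ^ 2 < 2 * ‖v‖ ^ 2)
    constructor <;> nlinarith
  -- initial vector
  set u0 : PiLp 2 (fun _ : Fin n => EuclideanSpace ℝ (Fin d)) :=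
    WithLp.toLp 2 (fun i => WithLp.toLp 2 ((Real.sqrt (α i))⁻¹ • (S i).mulVec (-(w i)))) with hu0def
  have hW0 : ∀ i, W u0 i = x 0 i - z := by
    intro i
    rw [hWap]
    show Real.sqrt (α i) • (S i).mulVec ((Real.sqrt (α i))⁻¹ • (S i).mulVec (-(w i))) = _
    rw [Matrix.mulVec_smul, smul_smul, mul_inv_cancel₀ (hsqpos i).ne', one_smul,
      ← hAv i, Matrix.mulVec_neg]
    have : (A i).mulVec (w i) = z - x 0 i := hw i
    rw [this]; abel
  have hNstep : ∀ v : PiLp 2 (fun _ : Fin n => EuclideanSpace ℝ (Fin d)),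
      Nl v = v - C v := by
    intro v; rw [hNdef]; simp [LinearMap.sub_apply]
  have hpowstep : ∀ k : ℕ, (Nl ^ (k + 1)) u0 = (Nl ^ k) u0 - C ((Nl ^ k) u0) := by
    intro k
    rw [pow_succ', Module.End.mul_apply, hNstep]
  have hWN : ∀ (v : PiLp 2 (fun _ : Fin n => EuclideanSpace ℝ (Fin d))) (i : Fin n),
      EtoP (W (v - C v) i) = EtoP (W v i) - α i • (A i).mulVec (EtoP (Lp (W v) i)) := by
    intro v i
    show Real.sqrt (α i) • (S i).mulVec
      (EtoP (v i) - Real.sqrt (α i) • (S i).mulVec (EtoP (Lp (W v) i))) = _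
    rw [Matrix.mulVec_sub, Matrix.mulVec_smul, smul_sub, smul_smul, hsq i, ← hAv i]
    rfl
  -- dynamics
  have hdyn : ∀ (k : ℕ) (i : Fin n), x k i = z + EtoP (W ((Nl ^ k) u0) i) := by
    intro k
    induction k with
    | zero =>
      intro i
      rw [pow_zero, Module.End.one_apply]
      have h : EtoP (W u0 i) = x 0 i - z := hW0 i
      rw [h]
      show x 0 i = z + (x 0 i - z)
      abel
    | succ k ih =>
      intro i
      rw [hupd k i]
      have hsum : ∑ j ∈ Γ.neighborFinset i, (x k i - x k j)
          = EtoP (Lp (W ((Nl ^ k) u0)) i) := by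
        have e : ∀ j, x k i - x k j
            = EtoP (W ((Nl ^ k) u0) i) - EtoP (W ((Nl ^ k) u0) j) := by
          intro j; rw [ih i, ih j]; abel
        rw [Finset.sum_congr rfl (fun j _ => e j)]
        have h2 : EtoP (Lp (W ((Nl ^ k) u0)) i)
            = ∑ j ∈ Γ.neighborFinset i, EtoP (W ((Nl ^ k) u0) i - W ((Nl ^ k) u0) j) := by
          show EtoP (∑ j ∈ Γ.neighborFinset i, (W ((Nl ^ k) u0) i - W ((Nl ^ k) u0) j)) = _
          exact EtoP_sum _ _
        rw [h2]
        exact Finset.sum_congr rfl fun j _ => (EtoP_sub _ _).symm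
      rw [hsum, ih i, hpowstep k, hWN ((Nl ^ k) u0) i]
      abel
  -- invariance
  have hinvr : ∀ (k : ℕ) (i : Fin n),
      EtoP (((Nl ^ k) u0) i) ∈ LinearMap.range (S i).mulVecLin := by
    intro k
    induction k with
    | zero =>
      intro i
      rw [pow_zero, Module.End.one_apply]
      refine ⟨(Real.sqrt (α i))⁻¹ • (-(w i)), ?_⟩
      show (S i).mulVec ((Real.sqrt (α i))⁻¹ • (-(w i))) = _
      rw [Matrix.mulVec_smul]
      rfl
    | succ k ih =>
      intro i
      rw [hpowstep k]
      have e : ((Nl ^ k) u0 - C ((Nl ^ k) u0)) i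
          = ((Nl ^ k) u0) i - C ((Nl ^ k) u0) i := rfl
      rw [e, EtoP_sub]
      refine Submodule.sub_mem _ (ih i) ?_
      refine ⟨Real.sqrt (α i) • EtoP (Lp (W ((Nl ^ k) u0)) i), ?_⟩
      show (S i).mulVec (Real.sqrt (α i) • EtoP (Lp (W ((Nl ^ k) u0)) i)) = _
      rw [Matrix.mulVec_smul]
      rfl
  -- convergence of the symmetric iteration
  obtain ⟨uinf, hfix, hconv⟩ := pow_tendsto_of_symmetric Nl hNsym hNeig u0
  set yinf := W uinf with hyinf
  have hCzero : C uinf = 0 := by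
    have : Nl uinf = uinf - C uinf := by
      rw [hNdef]; simp [LinearMap.sub_apply]
    rw [this] at hfix
    have := sub_eq_self.mp hfix
    exact this
  have hLq : ∑ i, ∑ j ∈ Finset.univ.filter (fun j => i < j ∧ Γ.Adj i j),
      ‖yinf i - yinf j‖ ^ 2 = 0 := by
    have h1 : ⟪C uinf, uinf⟫ = (0 : ℝ) := by rw [hCzero, inner_zero_left]
    rw [← hCq uinf]
    exact h1
  have hedge : ∀ i j, i < j → Γ.Adj i j → yinf i = yinf j := by
    intro i j hij hadj
    have h1 : ∀ i ∈ (Finset.univ : Finset (Fin n)),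
        0 ≤ ∑ j ∈ Finset.univ.filter (fun j => i < j ∧ Γ.Adj i j), ‖yinf i - yinf j‖ ^ 2 :=
      fun i _ => Finset.sum_nonneg fun j _ => sq_nonneg _
    have h2 := (Finset.sum_eq_zero_iff_of_nonneg h1).mp hLq i (Finset.mem_univ i)
    have h3 := (Finset.sum_eq_zero_iff_of_nonneg
      (fun j _ => sq_nonneg ‖yinf i - yinf j‖)).mp h2 j
      (Finset.mem_filter.mpr ⟨Finset.mem_univ j, hij, hadj⟩)
    have h4 : ‖yinf i - yinf j‖ = 0 := by nlinarith [norm_nonneg (yinf i - yinf j)]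
    exact sub_eq_zero.mp (norm_eq_zero.mp h4)
  have hadj_eq : ∀ i j, Γ.Adj i j → yinf i = yinf j := by
    intro i j hadj
    rcases lt_trichotomy i j with hlt | heq | hgt
    · exact hedge i j hlt hadj
    · rw [heq]
    · exact (hedge j i hgt (Γ.adj_symm hadj)).symm
  have hall_eq : ∀ i j, yinf i = yinf j := by
    intro i j
    obtain ⟨p⟩ := (hconn i j)
    induction p with
    | nil => rfl
    | cons h q ih => exact (hadj_eq _ _ h).trans ih
  -- projections
  let proj : Fin n → (PiLp 2 (fun _ : Fin n => EuclideanSpace ℝ (Fin d)) →ₗ[ℝ] (Fin d → ℝ)) :=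
    fun i => { toFun := fun u => EtoP (u i), map_add' := fun _ _ => rfl,
               map_smul' := fun _ _ => rfl }
  -- the limit point
  set i0 : Fin n := ⟨0, hn⟩
  refine ⟨z + EtoP (yinf i0), ?_, ?_⟩
  · intro i
    have h1 : (z + EtoP (yinf i0)) - x 0 i = EtoP (yinf i) + (z - x 0 i) := by
      rw [hall_eq i0 i]; abel
    rw [h1]
    refine Submodule.add_mem _ ?_ ⟨w i, hw i⟩
    -- yinf i ∈ range (A i).mulVecLin
    have hui : Tendsto (fun k => (proj i) ((Nl ^ k) u0)) atTop (nhds ((proj i) uinf)) :=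
      (((proj i).continuous_of_finiteDimensional).tendsto uinf).comp hconv
    have hmem : (proj i) uinf ∈ LinearMap.range (S i).mulVecLin := by
      refine IsClosed.mem_of_tendsto ?_ hui (Filter.Eventually.of_forall fun k => ?_)
      · exact Submodule.closed_of_finiteDimensional _
      · exact hinvr k i
    obtain ⟨r, hr⟩ := hmem
    refine ⟨Real.sqrt (α i) • r, ?_⟩
    show (A i).mulVec (Real.sqrt (α i) • r) = EtoP (yinf i)
    rw [Matrix.mulVec_smul, hAv i]
    have hr' : (S i).mulVec r = EtoP (uinf i) := hr
    rw [hr']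
    rfl
  · intro i
    have heq : (fun k : ℕ => x k i) = fun k => z + (proj i) (W ((Nl ^ k) u0)) :=
      funext fun k => hdyn k i
    rw [heq]
    have h2 : Tendsto (fun k => (proj i) (W ((Nl ^ k) u0))) atTop
        (nhds ((proj i) (W uinf))) := by
      have hc : Continuous fun u : PiLp 2 (fun _ : Fin n => EuclideanSpace ℝ (Fin d)) =>
          (proj i) (W u) := ((proj i).comp W).continuous_of_finiteDimensional
      exact (hc.tendsto uinf).comp hconv
    have h3 : (proj i) (W uinf) = EtoP (yinf i0) := by
      show EtoP (yinf i) = EtoP (yinf i0)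
      rw [hall_eq i i0]
    rw [h3] at h2
    exact h2.const_add z
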